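/- With the setup of the preceding statement, if for some index i the bracket {λᵢ, μᵢ} ≠ 0 in S, then F and G do not star-commute: F*G ≠ G*F in Mₙ(S[[h]]). -/

import Mathlib

/-!
Since the star product is `h`-linear and reduces to the product of `S` mod `h`, the `h`-coefficient
of `p * q` is `c(p₀, q₀) + p₁ q₀ + p₀ q₁`, where `c(a, b)` is the `h`-coefficient of `a * b` for
`a b ∈ S`. In the `(i, i)` entry of `F * G`, off-diagonal terms have `p₀ = q₀ = 0` and the diagonal
term has `p₁ = q₁ = 0`, so its `h`-coefficient is `c(λᵢ, μᵢ)`. Hence the `h`-coefficient of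
`(F * G - G * F)ᵢᵢ` is `c(λᵢ, μᵢ) - c(μᵢ, λᵢ) = {λᵢ, μᵢ} ≠ 0`.
-/

open PowerSeries

/-- `X` plays the role of the deformation parameter `h`. -/
structure IsDeformationOfMul {S : Type*} [CommRing S] (star : S⟦X⟧ → S⟦X⟧ → S⟦X⟧) : Prop where
  add_left : ∀ u v w, star (u + v) w = star u w + star v w
  add_right : ∀ u v w, star u (v + w) = star u v + star u w
  X_mul_left : ∀ u v, star (X * u) v = X * star u v
  X_mul_right : ∀ u v, star u (X * v) = X * star u v
  constantCoeff_star : ∀ u v, constantCoeff (star u v) = constantCoeff u * constantCoeff v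

namespace IsDeformationOfMul

variable {S : Type*} [CommRing S] {star : S⟦X⟧ → S⟦X⟧ → S⟦X⟧}

theorem zero_left (hstar : IsDeformationOfMul star) (w : S⟦X⟧) : star 0 w = 0 := by
  simpa using hstar.add_left 0 0 w

theorem coeff_one_star_X_mul_add_C (hstar : IsDeformationOfMul star) (u v : S⟦X⟧) (a b : S) :
    coeff 1 (star (X * u + C a) (X * v + C b)) =
      coeff 1 (star (C a) (C b)) + constantCoeff u * b + a * constantCoeff v := by
  simp only [hstar.add_left, hstar.add_right, hstar.X_mul_left, hstar.X_mul_right, map_add,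
    coeff_succ_X_mul, coeff_zero_eq_constantCoeff_apply, hstar.constantCoeff_star, map_mul,
    constantCoeff_C, constantCoeff_X, zero_mul, zero_add]
  ring

theorem coeff_one_star (hstar : IsDeformationOfMul star) (p q : S⟦X⟧) :
    coeff 1 (star p q) = coeff 1 (star (C (constantCoeff p)) (C (constantCoeff q))) +
      coeff 1 p * constantCoeff q + constantCoeff p * coeff 1 q := by
  conv_lhs => rw [eq_X_mul_shift_add_const p, eq_X_mul_shift_add_const q]
  exact hstar.coeff_one_star_X_mul_add_C _ _ _ _

theorem coeff_one_sum_star_of_diagonal (hstar : IsDeformationOfMul star) {ι : Type*} [Fintype ι]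
    [DecidableEq ι] {A B : Matrix ι ι S⟦X⟧} {a b : ι → S}
    (hA0 : ∀ i j, constantCoeff (A i j) = if i = j then a i else 0)
    (hB0 : ∀ i j, constantCoeff (B i j) = if i = j then b i else 0)
    (hA1 : ∀ i, coeff 1 (A i i) = 0) (hB1 : ∀ i, coeff 1 (B i i) = 0) (i : ι) :
    coeff 1 (∑ l, star (A i l) (B l i)) = coeff 1 (star (C (a i)) (C (b i))) := by
  rw [map_sum, Finset.sum_eq_single i]
  · rw [hstar.coeff_one_star]
    simp [hA0, hB0, hA1, hB1]
  · intro l _ hli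
    rw [hstar.coeff_one_star]
    simp [hA0, hB0, hli, Ne.symm hli, hstar.zero_left]
  · simp

end IsDeformationOfMul

theorem matrix_star_noncommute_of_bracket_ne_zero_general {S : Type*} [CommRing S]
    {n : ℕ}
    (star : PowerSeries S → PowerSeries S → PowerSeries S)
    (haddl : ∀ u v w, star (u + v) w = star u w + star v w)
    (haddr : ∀ u v w, star u (v + w) = star u v + star u w)
    (hXl : ∀ u v, star (PowerSeries.X * u) v = PowerSeries.X * star u v)
    (hXr : ∀ u v, star u (PowerSeries.X * v) = PowerSeries.X * star u v)
    (hmod : ∀ u v, PowerSeries.constantCoeff (R := S) (star u v) =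
      PowerSeries.constantCoeff (R := S) u * PowerSeries.constantCoeff (R := S) v)
    (F G : Matrix (Fin n) (Fin n) (PowerSeries S))
    (lam mu : Fin n → S) (EF EG : Matrix (Fin n) (Fin n) S)
    (hEF : ∀ i, EF i i = 0) (hEG : ∀ i, EG i i = 0)
    (hF0 : ∀ i j, PowerSeries.coeff (R := S) 0 (F i j) = if i = j then lam i else 0)
    (hG0 : ∀ i j, PowerSeries.coeff (R := S) 0 (G i j) = if i = j then mu i else 0)
    (hF1 : ∀ i j, PowerSeries.coeff (R := S) 1 (F i j) = EF i j)
    (hG1 : ∀ i j, PowerSeries.coeff (R := S) 1 (G i j) = EG i j)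
    (matStar : Matrix (Fin n) (Fin n) (PowerSeries S) →
      Matrix (Fin n) (Fin n) (PowerSeries S) → Matrix (Fin n) (Fin n) (PowerSeries S))
    (hmatStar : ∀ A B i j, matStar A B i j = ∑ l, star (A i l) (B l j))
    (hne : ∃ i, PowerSeries.coeff (R := S) 1
        (star (PowerSeries.C (R := S) (lam i)) (PowerSeries.C (R := S) (mu i)) -
          star (PowerSeries.C (R := S) (mu i)) (PowerSeries.C (R := S) (lam i))) ≠ 0) :
    matStar F G ≠ matStar G F := by
  have hstar : IsDeformationOfMul star := ⟨haddl, haddr, hXl, hXr, hmod⟩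
  have hF0' : ∀ i j, constantCoeff (F i j) = if i = j then lam i else 0 := by
    simpa only [coeff_zero_eq_constantCoeff_apply] using hF0
  have hG0' : ∀ i j, constantCoeff (G i j) = if i = j then mu i else 0 := by
    simpa only [coeff_zero_eq_constantCoeff_apply] using hG0
  have hF1' : ∀ i, coeff 1 (F i i) = 0 := fun i => (hF1 i i).trans (hEF i)
  have hG1' : ∀ i, coeff 1 (G i i) = 0 := fun i => (hG1 i i).trans (hEG i)
  obtain ⟨i, hi⟩ := hne
  intro hFG
  apply hi
  have hii : coeff 1 (matStar F G i i) = coeff 1 (matStar G F i i) := by rw [hFG]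
  rw [hmatStar, hmatStar, hstar.coeff_one_sum_star_of_diagonal hF0' hG0' hF1' hG1',
    hstar.coeff_one_sum_star_of_diagonal hG0' hF0' hG1' hF1'] at hii
  rw [map_sub, hii, sub_self]

theorem matrix_star_noncommute_of_bracket_ne_zero {k S : Type*} [Field k] [CommRing S] [Algebra k S]
    {n : ℕ}
    (star : PowerSeries S → PowerSeries S → PowerSeries S)
    (hassoc : ∀ u v w, star (star u v) w = star u (star v w))
    (haddl : ∀ u v w, star (u + v) w = star u w + star v w)
    (haddr : ∀ u v w, star u (v + w) = star u v + star u w)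
    (hXl : ∀ u v, star (PowerSeries.X * u) v = PowerSeries.X * star u v)
    (hXr : ∀ u v, star u (PowerSeries.X * v) = PowerSeries.X * star u v)
    (hmod : ∀ u v, PowerSeries.constantCoeff (R := S) (star u v) =
      PowerSeries.constantCoeff (R := S) u * PowerSeries.constantCoeff (R := S) v)
    (F G : Matrix (Fin n) (Fin n) (PowerSeries S))
    (lam mu : Fin n → S) (EF EG : Matrix (Fin n) (Fin n) S)
    (hEF : ∀ i, EF i i = 0) (hEG : ∀ i, EG i i = 0)
    (hF0 : ∀ i j, PowerSeries.coeff (R := S) 0 (F i j) = if i = j then lam i else 0)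
    (hG0 : ∀ i j, PowerSeries.coeff (R := S) 0 (G i j) = if i = j then mu i else 0)
    (hF1 : ∀ i j, PowerSeries.coeff (R := S) 1 (F i j) = EF i j)
    (hG1 : ∀ i j, PowerSeries.coeff (R := S) 1 (G i j) = EG i j)
    (matStar : Matrix (Fin n) (Fin n) (PowerSeries S) →
      Matrix (Fin n) (Fin n) (PowerSeries S) → Matrix (Fin n) (Fin n) (PowerSeries S))
    (hmatStar : ∀ A B i j, matStar A B i j = ∑ l, star (A i l) (B l j))
    (hne : ∃ i, PowerSeries.coeff (R := S) 1
        (star (PowerSeries.C (R := S) (lam i)) (PowerSeries.C (R := S) (mu i)) -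
          star (PowerSeries.C (R := S) (mu i)) (PowerSeries.C (R := S) (lam i))) ≠ 0) :
    matStar F G ≠ matStar G F :=
  matrix_star_noncommute_of_bracket_ne_zero_general star haddl haddr hXl hXr hmod F G lam mu EF EG
    hEF hEG hF0 hG0 hF1 hG1 matStar hmatStar hne
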